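/- If G and H are connected non-complete finite simple graphs, then the toll number of the Cartesian product G □ H equals 2. -/

import Mathlib

/-!
Choose `g₂ ∈ G` with a non-neighbour and `g₁` at maximal distance from it: then `g₁ ≁ g₂` and
shortest walks into `g₂` miss `g₁`, so `G - g₁` is connected; symmetrically choose `h₁, h₂ ∈ H`
with `H - h₂` connected. The corners `u = (g₁, h₁)` and `v = (g₂, h₂)` of `G □ H` differ in both
coordinates, so they are non-adjacent with disjoint neighbourhoods. Connectedness of `G - g₁`
lets every vertex outside `N[u]` reach `v` while avoiding `N[u]`; stopping at the first vertex
of `N(v)`, and arguing symmetrically, every vertex `t ∉ N[u] ∪ N[v]` lies on a walk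
`u, s₁, …, t, …, s₂, v` meeting `N(u)` only in `s₁` and `N(v)` only in `s₂`: a tolled walk,
which of course also passes through `u` and `v`.
A neighbour of a corner has a neighbour outside `N[u] ∪ N[v]`, which puts it on such a walk too.
So `{u, v}` is a toll set, while a single vertex `s` never is, as `T(s, s) = {s}`.
-/

open SimpleGraph

/-- A walk `W` between `u` and `v` is a *tolled walk* if either `u = v` and `W` is trivial,
or `u` and `v` are adjacent and `W` is the single-edge walk, or `u ≠ v` are non-adjacent,
`W` has at least one interior vertex, `u` is adjacent exactly to the interior vertex
at position 1 and `v` exactly to the interior vertex at position `W.length - 1`. -/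
def IsTolledWalk {V : Type*} (G : SimpleGraph V) {u v : V} (W : G.Walk u v) : Prop :=
  (u = v ∧ W.length = 0) ∨
  (G.Adj u v ∧ W.support = [u, v]) ∨
  (¬ G.Adj u v ∧ u ≠ v ∧ 2 ≤ W.length ∧
    (∀ i, 0 < i → i < W.length → (G.Adj u (W.support.getD i u) ↔ i = 1)) ∧
    (∀ i, 0 < i → i < W.length → (G.Adj v (W.support.getD i u) ↔ i = W.length - 1)))

/-- The toll interval between `u` and `v`: vertices lying on some tolled walk. -/
def tollInterval {V : Type*} (G : SimpleGraph V) (u v : V) : Set V :=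
  {x | ∃ W : G.Walk u v, IsTolledWalk G W ∧ x ∈ W.support}

/-- A toll set: the toll intervals between its pairs cover the vertex set. -/
def IsTollSet {V : Type*} (G : SimpleGraph V) (S : Set V) : Prop :=
  ∀ x : V, ∃ u ∈ S, ∃ v ∈ S, x ∈ tollInterval G u v

/-- The toll number: minimum size of a toll set. -/
noncomputable def tollNumber {V : Type*} (G : SimpleGraph V) : ℕ :=
  sInf {n | ∃ S : Set V, S.Finite ∧ S.ncard = n ∧ IsTollSet G S}

/-- `v` is a cut vertex if deleting it disconnects the graph. -/
def IsCutVertex {V : Type*} (G : SimpleGraph V) (v : V) : Prop :=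
  ¬ (G.induce {w | w ≠ v}).Preconnected

/-- The extreme vertices of `G` with respect to toll convexity. -/
def extremeVertices {V : Type*} (G : SimpleGraph V) : Set V :=
  {s | ∀ x y : V, x ≠ s → y ≠ s → s ∉ tollInterval G x y}

/-- The lexicographic product of simple graphs. -/
def lexProd {V W : Type*} (G : SimpleGraph V) (H : SimpleGraph W) : SimpleGraph (V × W) where
  Adj a b := G.Adj a.1 b.1 ∨ (a.1 = b.1 ∧ H.Adj a.2 b.2)
  symm := by
    constructor
    rintro a b (h | ⟨h1, h2⟩)
    · exact Or.inl h.symm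
    · exact Or.inr ⟨h1.symm, h2.symm⟩
  loopless := by
    constructor
    rintro a (h | ⟨_, h⟩)
    · exact G.irrefl h
    · exact H.irrefl h

section TolledWalks

variable {α : Type*} {P : SimpleGraph α}

lemma eq_of_mem_tollInterval_self {s z : α} (hz : z ∈ tollInterval P s s) : z = s := by
  obtain ⟨W, hW, hz⟩ := hz
  rcases hW with ⟨-, hlen⟩ | ⟨hadj, -⟩ | ⟨-, hne, -⟩
  · cases W with
    | nil => simpa using hz
    | cons => simp at hlen
  · exact absurd hadj (P.loopless.irrefl s)
  · exact absurd rfl hne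

lemma ends_mem_tollInterval {u v z : α} (hz : z ∈ tollInterval P u v) :
    u ∈ tollInterval P u v ∧ v ∈ tollInterval P u v := by
  obtain ⟨W, hW, -⟩ := hz
  exact ⟨⟨W, hW, W.start_mem_support⟩, ⟨W, hW, W.end_mem_support⟩⟩

lemma isTolledWalk_cons_cons_concat_concat {u v s₁ s₂ c₁ c₂ : α}
    (hus₁ : P.Adj u s₁) (hs₁c₁ : P.Adj s₁ c₁) (mid : P.Walk c₁ c₂)
    (hc₂s₂ : P.Adj c₂ s₂) (hs₂v : P.Adj s₂ v) (huv : ¬P.Adj u v) (hne : u ≠ v)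
    (hvs₁ : ¬P.Adj v s₁) (hus₂ : ¬P.Adj u s₂)
    (hmid : ∀ x ∈ mid.support, ¬P.Adj u x ∧ ¬P.Adj v x) :
    IsTolledWalk P (.cons hus₁ (.cons hs₁c₁ ((mid.concat hc₂s₂).concat hs₂v))) := by
  set Wk : P.Walk u v := .cons hus₁ (.cons hs₁c₁ ((mid.concat hc₂s₂).concat hs₂v))
  have hsupp : Wk.support = u :: s₁ :: (mid.support ++ [s₂, v]) := by
    simp [Wk, Walk.support_concat]
  have hlen : Wk.length = mid.length + 4 := by simp [Wk]
  have hmsl : mid.support.length = mid.length + 1 := mid.length_support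
  have hget : ∀ i, 0 < i → i < Wk.length →
      (Wk.support.getD i u = s₁ ∧ i = 1) ∨
      (Wk.support.getD i u ∈ mid.support ∧ 2 ≤ i ∧ i ≤ mid.length + 2) ∨
      (Wk.support.getD i u = s₂ ∧ i = mid.length + 3) := by
    intro i hi0 hi
    rw [hlen] at hi
    rw [hsupp]
    match i, hi0 with
    | 1, _ => exact Or.inl ⟨rfl, rfl⟩
    | n + 2, _ =>
      rw [List.getD_cons_succ, List.getD_cons_succ]
      by_cases hn : n < mid.support.length
      · refine Or.inr (Or.inl ⟨?_, by omega, by omega⟩)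
        rw [List.getD_append _ _ _ _ hn, List.getD_eq_getElem _ _ hn]
        exact List.getElem_mem hn
      · obtain rfl : n = mid.length + 1 := by omega
        rw [List.getD_append_right _ _ _ _ (by omega), hmsl, Nat.sub_self]
        exact Or.inr (Or.inr ⟨rfl, rfl⟩)
  refine Or.inr (Or.inr ⟨huv, hne, by omega, fun i hi0 hi => ?_, fun i hi0 hi => ?_⟩)
  · rcases hget i hi0 hi with ⟨he, rfl⟩ | ⟨hx, h2, -⟩ | ⟨he, rfl⟩
    · exact iff_of_true (he ▸ hus₁) rfl
    · exact iff_of_false (hmid _ hx).1 (by omega)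
    · exact iff_of_false (he ▸ hus₂) (by omega)
  · rcases hget i hi0 hi with ⟨he, rfl⟩ | ⟨hx, -, h2⟩ | ⟨he, rfl⟩
    · exact iff_of_false (he ▸ hvs₁) (by omega)
    · exact iff_of_false (hmid _ hx).2 (by omega)
    · exact iff_of_true (he ▸ hs₂v.symm) (by omega)

lemma exists_walk_forall_mem_support_trans {Q : α → Prop} {s m r : α}
    (h₁ : ∃ w : P.Walk s m, ∀ z ∈ w.support, Q z) (h₂ : ∃ w : P.Walk m r, ∀ z ∈ w.support, Q z) :
    ∃ w : P.Walk s r, ∀ z ∈ w.support, Q z := by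
  obtain ⟨w₁, hw₁⟩ := h₁
  obtain ⟨w₂, hw₂⟩ := h₂
  exact ⟨w₁.append w₂, fun z hz => ((Walk.mem_support_append_iff _ _).mp hz).elim (hw₁ z) (hw₂ z)⟩

lemma exists_walk_to_neighbor_of_neighbor {Q : α → Prop} {v : α} :
    ∀ {t : α} (w : P.Walk t v), (∀ z ∈ w.support, Q z) → ¬P.Adj v t → t ≠ v →
      ∃ c s, ∃ w' : P.Walk t c, (∀ z ∈ w'.support, Q z ∧ ¬P.Adj v z) ∧ P.Adj c s ∧ P.Adj s v
  | _, .nil, _, _, htv => absurd rfl htv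
  | t, .cons (v := t') htt' w, hQ, hvt, _ => by
    simp only [Walk.support_cons, List.mem_cons, forall_eq_or_imp] at hQ
    by_cases hvt' : P.Adj v t'
    · exact ⟨t, t', .nil, by simpa using ⟨hQ.1, hvt⟩, htt', hvt'.symm⟩
    have ht'v : t' ≠ v := by
      rintro rfl
      exact hvt htt'.symm
    obtain ⟨c, s, w', hw', hcs, hsv⟩ :=
      exists_walk_to_neighbor_of_neighbor w hQ.2 hvt' ht'v
    refine ⟨c, s, .cons htt' w', ?_, hcs, hsv⟩
    simpa [Walk.support_cons] using ⟨⟨hQ.1, hvt⟩, hw'⟩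

variable {u v : α}

lemma mem_tollInterval_of_not_adj {t : α} (huv : ¬P.Adj u v) (hne : u ≠ v)
    (hdisj : ∀ s, P.Adj u s → ¬P.Adj v s)
    (hreach : ∀ t, ¬P.Adj u t → ¬P.Adj v t → t ≠ u → t ≠ v → ∀ x ∈ ({u, v} : Set α),
      ∃ c s, ∃ w : P.Walk t c, (∀ z ∈ w.support, ¬P.Adj u z ∧ ¬P.Adj v z) ∧
        P.Adj c s ∧ P.Adj s x)
    (hut : ¬P.Adj u t) (hvt : ¬P.Adj v t) (htu : t ≠ u) (htv : t ≠ v) :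
    t ∈ tollInterval P u v := by
  obtain ⟨c₁, s₁, w₁, hw₁, hc₁s₁, hs₁u⟩ := hreach t hut hvt htu htv u (by simp)
  obtain ⟨c₂, s₂, w₂, hw₂, hc₂s₂, hs₂v⟩ := hreach t hut hvt htu htv v (by simp)
  have hmid : ∀ z ∈ (w₁.reverse.append w₂).support, ¬P.Adj u z ∧ ¬P.Adj v z := by
    simp only [Walk.mem_support_append_iff, Walk.support_reverse, List.mem_reverse]
    exact fun z hz => hz.elim (hw₁ z) (hw₂ z)
  exact ⟨_, isTolledWalk_cons_cons_concat_concat hs₁u.symm hc₁s₁.symm _ hc₂s₂ hs₂v huv hne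
    (hdisj _ hs₁u.symm) (fun h => hdisj _ h hs₂v.symm) hmid, by simp⟩

theorem isTollSet_pair (huv : ¬P.Adj u v) (hne : u ≠ v)
    (hdisj : ∀ s, P.Adj u s → ¬P.Adj v s)
    (hreach : ∀ t, ¬P.Adj u t → ¬P.Adj v t → t ≠ u → t ≠ v → ∀ x ∈ ({u, v} : Set α),
      ∃ c s, ∃ w : P.Walk t c, (∀ z ∈ w.support, ¬P.Adj u z ∧ ¬P.Adj v z) ∧
        P.Adj c s ∧ P.Adj s x)
    (hnbr : ∀ s, P.Adj u s ∨ P.Adj v s →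
      ∃ c, P.Adj s c ∧ ¬P.Adj u c ∧ ¬P.Adj v c ∧ c ≠ u ∧ c ≠ v)
    (hfar : ∃ t, ¬P.Adj u t ∧ ¬P.Adj v t ∧ t ≠ u ∧ t ≠ v) :
    IsTollSet P {u, v} := by
  have hoff : ∀ {t}, ¬P.Adj u t → ¬P.Adj v t → t ≠ u → t ≠ v → t ∈ tollInterval P u v :=
    mem_tollInterval_of_not_adj huv hne hdisj hreach
  intro t
  refine ⟨u, by simp, v, by simp, ?_⟩
  by_cases hut : P.Adj u t
  · obtain ⟨c, htc, huc, hvc, hcu, hcv⟩ := hnbr t (.inl hut)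
    obtain ⟨c₂, s₂, w, hw, hc₂s₂, hs₂v⟩ := hreach c huc hvc hcu hcv v (by simp)
    exact ⟨_, isTolledWalk_cons_cons_concat_concat hut htc w hc₂s₂ hs₂v huv hne
      (hdisj t hut) (fun h => hdisj _ h hs₂v.symm) hw, by simp⟩
  by_cases hvt : P.Adj v t
  · obtain ⟨c, htc, huc, hvc, hcu, hcv⟩ := hnbr t (.inr hvt)
    obtain ⟨c₁, s₁, w, hw, hc₁s₁, hs₁u⟩ := hreach c huc hvc hcu hcv u (by simp)
    have hw' : ∀ z ∈ w.reverse.support, ¬P.Adj u z ∧ ¬P.Adj v z := by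
      simpa only [Walk.support_reverse, List.mem_reverse] using hw
    exact ⟨_, isTolledWalk_cons_cons_concat_concat hs₁u.symm hc₁s₁.symm w.reverse htc.symm
      hvt.symm huv hne (hdisj _ hs₁u.symm) hut hw', by simp⟩
  by_cases htuv : t = u ∨ t = v
  · obtain ⟨t₀, hut₀, hvt₀, ht₀u, ht₀v⟩ := hfar
    obtain ⟨hu, hv⟩ := ends_mem_tollInterval (hoff hut₀ hvt₀ ht₀u ht₀v)
    rcases htuv with rfl | rfl
    exacts [hu, hv]
  rw [not_or] at htuv
  exact hoff hut hvt htuv.1 htuv.2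

lemma two_le_ncard_of_isTollSet (hne : u ≠ v) {S : Set α} (hS : S.Finite) (hT : IsTollSet P S) :
    2 ≤ S.ncard := by
  by_contra! hlt
  have := hS.to_subtype
  have hsub : S.Subsingleton := Set.ncard_le_one_iff_subsingleton.mp (by omega)
  obtain ⟨s, hs, s', hs', hu⟩ := hT u
  obtain ⟨r, hr, r', hr', hv⟩ := hT v
  rw [hsub hs' hs] at hu
  rw [hsub hr' hr] at hv
  exact hne ((eq_of_mem_tollInterval_self hu).trans
    ((hsub hs hr).trans (eq_of_mem_tollInterval_self hv).symm))

theorem tollNumber_eq_two_of_isTollSet_pair (hne : u ≠ v) (hT : IsTollSet P {u, v}) :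
    tollNumber P = 2 :=
  le_antisymm (Nat.sInf_le ⟨_, Set.toFinite _, Set.ncard_pair hne, hT⟩)
    (le_csInf ⟨2, _, Set.toFinite _, Set.ncard_pair hne, hT⟩
      fun _ ⟨_, hS, hn, hS'⟩ => hn ▸ two_le_ncard_of_isTollSet hne hS hS')

end TolledWalks

namespace SimpleGraph

variable {V W : Type*} {G : SimpleGraph V} {H : SimpleGraph W}

lemma Connected.exists_not_adj_forall_walk_avoiding [Finite V] (hG : G.Connected) (hne : G ≠ ⊤) :
    ∃ p a, a ≠ p ∧ ¬G.Adj p a ∧ ∀ x, x ≠ p → ∃ w : G.Walk x a, p ∉ w.support := by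
  obtain ⟨a, b, hab, hnab⟩ := ne_top_iff_exists_not_adj.mp hne
  have : Nonempty V := ⟨a⟩
  obtain ⟨p, hp⟩ := Finite.exists_max (G.dist a)
  have hfar : 1 < G.dist a p := (hG.one_lt_dist_of_ne_of_not_adj hab hnab).trans_le (hp b)
  refine ⟨p, a, ?_, fun h => ?_, fun x hxp => ?_⟩
  · rintro rfl
    simp at hfar
  · rw [← dist_eq_one_iff_adj, dist_comm] at h
    omega
  obtain ⟨w, hw⟩ := hG.exists_walk_length_eq_dist x a
  refine ⟨w, fun hpw => ?_⟩
  classical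
  have htake : 0 < (w.takeUntil p hpw).length :=
    Nat.pos_of_ne_zero fun h => hxp (Walk.eq_of_length_eq_zero h)
  have hsplit := congrArg Walk.length (w.take_spec hpw)
  rw [Walk.length_append] at hsplit
  have hdrop : G.dist a p ≤ (w.dropUntil p hpw).length := dist_comm (G := G) ▸ dist_le _
  have hmax : G.dist x a ≤ G.dist a p := dist_comm (G := G) ▸ hp x
  omega

lemma Walk.forall_mem_support_boxProdLeft {Q : V × W → Prop} {x x' : V} (y : W)
    (w : G.Walk x x') : (∀ z ∈ (w.boxProdLeft H y).support, Q z) ↔ ∀ z ∈ w.support, Q (z, y) :=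
  (Walk.support_map _ w).symm ▸ List.forall_mem_map

lemma Walk.forall_mem_support_boxProdRight {Q : V × W → Prop} {y y' : W} (x : V)
    (w : H.Walk y y') : (∀ z ∈ (w.boxProdRight G x).support, Q z) ↔ ∀ z ∈ w.support, Q (x, z) :=
  (Walk.support_map _ w).symm ▸ List.forall_mem_map

lemma boxProd_not_adj_of_ne_of_ne {a a' : V} {b b' : W} (ha : a ≠ a') (hb : b ≠ b') :
    ¬(G □ H).Adj (a, b) (a', b') := by
  simp [boxProd_adj, ha, hb]

lemma boxProd_exists_walk_avoiding_of_left (hGc : G.Connected) (hHc : H.Connected)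
    {p a : V} {q b : W} (hap : a ≠ p) (hpa : ¬G.Adj p a)
    (hp : ∀ x, x ≠ p → ∃ w : G.Walk x a, p ∉ w.support) (hbq : b ≠ q) (hqb : ¬H.Adj q b)
    {t : V × W} (hpt : ¬(G □ H).Adj (p, q) t) (htp : t ≠ (p, q)) :
    ∃ w : (G □ H).Walk t (a, b), ∀ z ∈ w.support, ¬(G □ H).Adj (p, q) z ∧ z ≠ (p, q) := by
  set Good : V × W → Prop := fun z => ¬(G □ H).Adj (p, q) z ∧ z ≠ (p, q)
  have row : ∀ {x x' : V} (y : W) (w : G.Walk x x'), (∀ z ∈ w.support, Good (z, y)) →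
      ∃ w : (G □ H).Walk (x, y) (x', y), ∀ z ∈ w.support, Good z :=
    fun y w h => ⟨w.boxProdLeft H y, (w.forall_mem_support_boxProdLeft y).mpr h⟩
  have col : ∀ (x : V) {y y' : W} (w : H.Walk y y'), (∀ z ∈ w.support, Good (x, z)) →
      ∃ w : (G □ H).Walk (x, y) (x, y'), ∀ z ∈ w.support, Good z :=
    fun x _ _ w h => ⟨w.boxProdRight G x, (w.forall_mem_support_boxProdRight x).mpr h⟩
  have good_of_snd : ∀ {y}, y ≠ q → ¬H.Adj q y → ∀ x, Good (x, y) := by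
    intro y hyq hqy x
    simp [Good, boxProd_adj, hqy, hyq, Ne.symm hyq]
  have good_of_fst : ∀ {x}, x ≠ p → ¬G.Adj p x → ∀ y, Good (x, y) := by
    intro x hxp hpx y
    simp [Good, boxProd_adj, hpx, hxp, Ne.symm hxp]
  have good_of_ne : ∀ {x y}, x ≠ p → y ≠ q → Good (x, y) := fun hxp hyq =>
    ⟨boxProd_not_adj_of_ne_of_ne (Ne.symm hxp) (Ne.symm hyq), fun h => hxp (congrArg Prod.fst h)⟩
  obtain ⟨x, y⟩ := t
  by_cases hyq : y = q
  · subst hyq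
    have hpx : ¬G.Adj p x := fun h => hpt (boxProd_adj.mpr (.inl ⟨h, rfl⟩))
    have hxp : x ≠ p := fun h => htp (by rw [h])
    exact exists_walk_forall_mem_support_trans
      (col x (hHc y b).some fun z _ => good_of_fst hxp hpx z)
      (row b (hGc x a).some fun z _ => good_of_snd hbq hqb z)
  have hcol_a := col a (hHc y b).some fun z _ => good_of_fst hap hpa z
  -- in a row next to `q` only `(p, y)` is forbidden, so leave it along a walk missing `p`
  by_cases hqy : H.Adj q y
  · have hxp : x ≠ p := by
      rintro rfl
      exact hpt (boxProd_adj.mpr (.inr ⟨hqy, rfl⟩))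
    obtain ⟨w, hw⟩ := hp x hxp
    exact exists_walk_forall_mem_support_trans
      (row y w fun z hz => good_of_ne (fun h => hw (h ▸ hz)) hyq) hcol_a
  · exact exists_walk_forall_mem_support_trans
      (row y (hGc x a).some fun z _ => good_of_snd hyq hqy z) hcol_a

lemma boxProd_exists_walk_avoiding_of_right (hGc : G.Connected) (hHc : H.Connected)
    {p a : V} {q b : W} (hap : a ≠ p) (hpa : ¬G.Adj p a) (hbq : b ≠ q) (hqb : ¬H.Adj q b)
    (hq : ∀ y, y ≠ q → ∃ w : H.Walk y b, q ∉ w.support)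
    {t : V × W} (hpt : ¬(G □ H).Adj (p, q) t) (htp : t ≠ (p, q)) :
    ∃ w : (G □ H).Walk t (a, b), ∀ z ∈ w.support, ¬(G □ H).Adj (p, q) z ∧ z ≠ (p, q) := by
  have hswap : ∀ z : V × W, (H □ G).Adj (q, p) z.swap ↔ (G □ H).Adj (p, q) z :=
    fun z => (boxProdComm G H).map_rel_iff (a := (p, q)) (b := z)
  obtain ⟨w, hw⟩ := boxProd_exists_walk_avoiding_of_left hHc hGc hbq hqb hq hap hpa (t := t.swap)
    ((hswap t).not.mpr hpt) (fun h => htp (congrArg Prod.swap h))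
  refine ⟨w.map (boxProdComm H G).toHom, fun z hz => ?_⟩
  obtain ⟨z', hz', rfl⟩ := List.mem_map.mp (Walk.support_map _ _ ▸ hz)
  obtain ⟨hadj, hne⟩ := hw z' hz'
  exact ⟨(hswap z'.swap).not.mp hadj, fun h => hne (congrArg Prod.swap h)⟩

lemma boxProd_exists_adj_far_of_adj_corner (hGc : G.Connected) (hHc : H.Connected)
    {g₁ g₂ : V} {h₁ h₂ : W} (hg : g₂ ≠ g₁) (hg' : ¬G.Adj g₁ g₂) (hh : h₁ ≠ h₂)
    (hh' : ¬H.Adj h₂ h₁) {s : V × W} (hs : (G □ H).Adj (g₁, h₁) s ∨ (G □ H).Adj (g₂, h₂) s) :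
    ∃ c, (G □ H).Adj s c ∧ ¬(G □ H).Adj (g₁, h₁) c ∧ ¬(G □ H).Adj (g₂, h₂) c ∧
      c ≠ (g₁, h₁) ∧ c ≠ (g₂, h₂) := by
  have : Nontrivial V := nontrivial_of_ne _ _ hg
  have : Nontrivial W := nontrivial_of_ne _ _ hh
  have hoff : ∀ {x y}, x ≠ g₁ → x ≠ g₂ → y ≠ h₁ → y ≠ h₂ →
      ¬(G □ H).Adj (g₁, h₁) (x, y) ∧ ¬(G □ H).Adj (g₂, h₂) (x, y) ∧
        (x, y) ≠ (g₁, h₁) ∧ (x, y) ≠ (g₂, h₂) := fun hx₁ hx₂ hy₁ hy₂ =>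
    ⟨boxProd_not_adj_of_ne_of_ne hx₁.symm hy₁.symm, boxProd_not_adj_of_ne_of_ne hx₂.symm hy₂.symm,
      fun h => hx₁ (congrArg Prod.fst h), fun h => hx₂ (congrArg Prod.fst h)⟩
  have hGnbr : ∀ {g x}, (g = g₁ ∨ g = g₂) → G.Adj g x → x ≠ g₁ ∧ x ≠ g₂ := by
    rintro g x (rfl | rfl) hgx
    exacts [⟨hgx.ne', fun h => hg' (h ▸ hgx)⟩, ⟨fun h => hg' (h ▸ hgx.symm), hgx.ne'⟩]
  have hHnbr : ∀ {h y}, (h = h₁ ∨ h = h₂) → H.Adj h y → y ≠ h₁ ∧ y ≠ h₂ := by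
    rintro h y (rfl | rfl) hhy
    exacts [⟨hhy.ne', fun e => hh' (e ▸ hhy.symm)⟩, ⟨fun e => hh' (e ▸ hhy), hhy.ne'⟩]
  obtain ⟨g, h, hg, hh, hadj⟩ :
      ∃ g h, (g = g₁ ∨ g = g₂) ∧ (h = h₁ ∨ h = h₂) ∧ (G □ H).Adj (g, h) s := by
    rcases hs with hs | hs
    exacts [⟨g₁, h₁, .inl rfl, .inl rfl, hs⟩, ⟨g₂, h₂, .inr rfl, .inr rfl, hs⟩]
  obtain ⟨x, y⟩ := s
  rcases boxProd_adj.mp hadj with ⟨hgx, rfl⟩ | ⟨hhy, rfl⟩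
  · obtain ⟨y', hyy'⟩ := hHc.preconnected.exists_adj_of_nontrivial h
    obtain ⟨hx₁, hx₂⟩ := hGnbr hg hgx
    obtain ⟨hy₁, hy₂⟩ := hHnbr hh hyy'
    exact ⟨(x, y'), boxProd_adj.mpr (.inr ⟨hyy', rfl⟩), hoff hx₁ hx₂ hy₁ hy₂⟩
  · obtain ⟨x', hxx'⟩ := hGc.preconnected.exists_adj_of_nontrivial g
    obtain ⟨hx₁, hx₂⟩ := hGnbr hg hxx'
    obtain ⟨hy₁, hy₂⟩ := hHnbr hh hhy
    exact ⟨(x', y), boxProd_adj.mpr (.inl ⟨hxx', rfl⟩), hoff hx₁ hx₂ hy₁ hy₂⟩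

theorem boxProd_isTollSet_pair (hGc : G.Connected) (hHc : H.Connected)
    {g₁ g₂ : V} {h₁ h₂ : W} (hg : g₂ ≠ g₁) (hg' : ¬G.Adj g₁ g₂)
    (hg₁ : ∀ x, x ≠ g₁ → ∃ w : G.Walk x g₂, g₁ ∉ w.support)
    (hh : h₁ ≠ h₂) (hh' : ¬H.Adj h₂ h₁)
    (hh₂ : ∀ y, y ≠ h₂ → ∃ w : H.Walk y h₁, h₂ ∉ w.support) :
    IsTollSet (G □ H) {(g₁, h₁), (g₂, h₂)} := by
  refine isTollSet_pair (boxProd_not_adj_of_ne_of_ne hg.symm hh)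
    (fun h => hg (congrArg Prod.fst h).symm) ?_ ?_
    (fun _ hs => boxProd_exists_adj_far_of_adj_corner hGc hHc hg hg' hh hh' hs)
    ⟨(g₂, h₁), by simp [boxProd_adj, hg', hh', hg, hh]⟩
  · rintro ⟨x, y⟩ h₁s h₂s
    simp only [boxProd_adj] at h₁s h₂s
    rcases h₁s with ⟨h1, rfl⟩ | ⟨h1, rfl⟩ <;> rcases h₂s with ⟨h2, e⟩ | ⟨h2, e⟩
    exacts [hh e.symm, hh' h2, hg' h2.symm, hg e]
  · intro t hut hvt htu htv x hx
    rcases hx with rfl | rfl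
    · obtain ⟨w, hw⟩ := boxProd_exists_walk_avoiding_of_right hGc hHc hg.symm
        (fun h => hg' h.symm) hh hh' hh₂ hvt htv
      obtain ⟨c, s, w', hw', hcs, hsu⟩ := exists_walk_to_neighbor_of_neighbor w hw hut htu
      exact ⟨c, s, w', fun z hz => ⟨(hw' z hz).2, (hw' z hz).1.1⟩, hcs, hsu⟩
    · obtain ⟨w, hw⟩ := boxProd_exists_walk_avoiding_of_left hGc hHc hg hg' hg₁ hh.symm
        (fun h => hh' h.symm) hut htu
      obtain ⟨c, s, w', hw', hcs, hsv⟩ := exists_walk_to_neighbor_of_neighbor w hw hvt htv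
      exact ⟨c, s, w', fun z hz => ⟨(hw' z hz).1.1, (hw' z hz).2⟩, hcs, hsv⟩

end SimpleGraph

theorem stmt2 {V W : Type*} [Fintype V] [Fintype W]
    (G : SimpleGraph V) (H : SimpleGraph W)
    (hGc : G.Connected) (hHc : H.Connected) (hG : G ≠ ⊤) (hH : H ≠ ⊤) :
    tollNumber (G □ H) = 2 := by
  obtain ⟨g₁, g₂, hg, hg', hg₁⟩ := hGc.exists_not_adj_forall_walk_avoiding hG
  obtain ⟨h₂, h₁, hh, hh', hh₂⟩ := hHc.exists_not_adj_forall_walk_avoiding hH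
  exact tollNumber_eq_two_of_isTollSet_pair (fun h => hg (congrArg Prod.fst h).symm)
    (boxProd_isTollSet_pair hGc hHc hg hg' hg₁ hh hh' hh₂)
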